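/- Let g : X → [−∞, +∞] and let X̄ be a random variable on X with E[exp(g(X̄))] < ∞. Then for any random variable X on X with D(P_X ‖ P_X̄) < ∞, E[g(X)] − D(P_X ‖ P_X̄) ≤ log E[exp(g(X̄))], with equality if and only if X has distribution P_{X⋆} satisfying log(dP_{X⋆}/dP_X̄)(x) = g(x) − log E[exp(g(X̄))]. -/

import Mathlib

/-!
Tilting `ν` by `g` gives the Gibbs measure `γ = ν.tilted g`, with
`log (dγ/dν) = g - log ∫ exp g dν`. Hence `log (dμ/dγ) = log (dμ/dν) - g + log ∫ exp g dν`
μ-a.e., and integrating against `μ`, `∫ g dμ - D(μ‖ν) = log ∫ exp g dν - D(μ‖γ)`.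
Gibbs' inequality `D(μ‖γ) ≥ 0`, with equality iff `μ = γ`, gives both the bound and its
equality case.
-/

open MeasureTheory

/-- Relative entropy (KL divergence) in nats: `D(P‖Q) = ∫ log (dP/dQ) dP`. -/
noncomputable def relEnt {α : Type*} [MeasurableSpace α] (P Q : Measure α) : ℝ :=
  ∫ x, Real.log ((P.rnDeriv Q) x).toReal ∂P

open InformationTheory Real Set

section RelEnt

variable {α : Type*} [MeasurableSpace α] {μ ν : Measure α}

lemma relEnt_eq_integral_llr (μ ν : Measure α) : relEnt μ ν = ∫ x, llr μ ν x ∂μ := rfl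

lemma relEnt_eq_toReal_klDiv [IsFiniteMeasure μ] [IsFiniteMeasure ν] (hμν : μ ≪ ν)
    (huniv : μ univ = ν univ) :
    relEnt μ ν = (klDiv μ ν).toReal :=
  (toReal_klDiv_of_measure_eq hμν huniv).symm

section Probability

variable [IsProbabilityMeasure μ] [IsProbabilityMeasure ν]

lemma relEnt_nonneg (hμν : μ ≪ ν) : 0 ≤ relEnt μ ν := by
  rw [relEnt_eq_toReal_klDiv hμν (by simp)]
  exact ENNReal.toReal_nonneg

lemma relEnt_eq_zero_iff (hμν : μ ≪ ν) (h_int : Integrable (llr μ ν) μ) :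
    relEnt μ ν = 0 ↔ μ = ν := by
  rw [relEnt_eq_toReal_klDiv hμν (by simp), ENNReal.toReal_eq_zero_iff,
    or_iff_left (klDiv_ne_top hμν h_int), klDiv_eq_zero_iff]

lemma integral_sub_relEnt_eq_log_sub_relEnt_tilted {g : α → ℝ} (hμν : μ ≪ ν)
    (hgμ : Integrable g μ) (hgν : Integrable (fun x ↦ exp (g x)) ν)
    (h_int : Integrable (llr μ ν) μ) :
    (∫ x, g x ∂μ) - relEnt μ ν = log (∫ x, exp (g x) ∂ν) - relEnt μ (ν.tilted g) := by
  rw [relEnt_eq_integral_llr, relEnt_eq_integral_llr, integral_llr_tilted_right hμν hgμ hgν h_int]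
  ring

lemma relEnt_tilted_eq_zero_iff {g : α → ℝ} (hμν : μ ≪ ν)
    (hgμ : Integrable g μ) (hgν : Integrable (fun x ↦ exp (g x)) ν)
    (h_int : Integrable (llr μ ν) μ) :
    relEnt μ (ν.tilted g) = 0 ↔
      ∀ᵐ x ∂ν, log (μ.rnDeriv ν x).toReal = g x - log (∫ x', exp (g x') ∂ν) := by
  have : IsProbabilityMeasure (ν.tilted g) := isProbabilityMeasure_tilted hgν
  constructor
  · intro h
    rw [relEnt_eq_zero_iff (hμν.trans (absolutelyContinuous_tilted hgν))
      (integrable_llr_tilted_right hμν hgμ h_int hgν)] at h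
    subst h
    exact log_rnDeriv_tilted_left_self hgν
  · intro h
    rw [relEnt_eq_integral_llr, integral_eq_zero_of_ae]
    filter_upwards [llr_tilted_right hμν hgν, hμν.ae_le h] with x hx hlog
    rw [hx, llr, hlog, Pi.zero_apply]
    ring

end Probability

end RelEnt

/-- Donsker–Varadhan: if `E[exp g(X̄)] < ∞` then for any `X` with `D(P_X ‖ P_X̄) < ∞`,
`E[g(X)] − D(P_X‖P_X̄) ≤ log E[exp g(X̄)]`, with equality iff the distribution of `X` is the
Gibbs tilting of `P_X̄`, i.e. `log (dP_X/dP_X̄)(x) = g(x) − log E[exp g(X̄)]` a.e. -/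
theorem stmt_1 {α : Type*} [MeasurableSpace α] (ν μ : Measure α)
    [IsProbabilityMeasure ν] [IsProbabilityMeasure μ]
    (g : α → ℝ) (hgexp : Integrable (fun x => Real.exp (g x)) ν)
    (hgint : Integrable g μ) (hac : μ ≪ ν)
    (hKLfin : Integrable (fun x => Real.log ((μ.rnDeriv ν) x).toReal) μ) :
    (∫ x, g x ∂μ) - relEnt μ ν ≤ Real.log (∫ x, Real.exp (g x) ∂ν) ∧
      ((∫ x, g x ∂μ) - relEnt μ ν = Real.log (∫ x, Real.exp (g x) ∂ν) ↔
        ∀ᵐ x ∂ν, Real.log ((μ.rnDeriv ν) x).toReal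
          = g x - Real.log (∫ x', Real.exp (g x') ∂ν)) := by
  have : IsProbabilityMeasure (ν.tilted g) := isProbabilityMeasure_tilted hgexp
  rw [integral_sub_relEnt_eq_log_sub_relEnt_tilted hac hgint hgexp hKLfin, sub_le_self_iff,
    sub_eq_self, relEnt_tilted_eq_zero_iff hac hgint hgexp hKLfin]
  exact ⟨relEnt_nonneg (hac.trans (absolutelyContinuous_tilted hgexp)), Iff.rfl⟩
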